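/- For every function f : {-1,0,1}^n → {±1}, the Fourier influence satisfies (3/8)·I^Fourier(f) ≤ I(f) ≤ (3/4)·I^Fourier(f), where I(f) is the edge-boundary influence and I^Fourier(f) = Σ_i ⟨f, f − E_i f⟩. -/

import Mathlib

/-- The ternary hypercube `{-1,0,1}^n` as a finset of points of `ℝ^n`. -/
noncomputable def ternary (n : ℕ) : Finset (Fin n → ℝ) :=
  Fintype.piFinset fun _ => ({-1, 0, 1} : Finset ℝ)

/-- The edge-boundary influence `I(f) = 3^{−n}·#{edges (u,v) : f(u) ≠ f(v)}`, where
edges of the ternary hypercube are (unordered) pairs with `∑ i, |u i - v i| = 1`. -/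
noncomputable def edgeInfluence (n : ℕ) (f : (Fin n → ℝ) → ℝ) : ℝ :=
  (((((ternary n) ×ˢ (ternary n)).filter
      (fun p : (Fin n → ℝ) × (Fin n → ℝ) => (∑ i, |p.1 i - p.2 i|) = 1 ∧ f p.1 ≠ f p.2)).image
    (fun p => Sym2.mk p.1 p.2)).card : ℝ) / 3 ^ n

/-- The total Fourier influence `I^Fourier(f) = Σ_i ⟨f, f − E_i f⟩` with respect to the
uniform distribution on `{-1,0,1}^n`, where `E_i f(x) = E_{b∈{-1,0,1}} f(x^{i←b})`. -/
noncomputable def fourierInfluence (n : ℕ) (f : (Fin n → ℝ) → ℝ) : ℝ :=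
  ∑ i : Fin n,
    (∑ x ∈ ternary n, f x * (f x -
      (f (Function.update x i (-1)) + f (Function.update x i 0) +
        f (Function.update x i 1)) / 3)) / 3 ^ n

/-! Both influences decompose over the axis-parallel lines of the cube. On a line where `f` takes
the values `a, b, c ∈ {±1}`, the Fourier influence picks up `3 - (a + b + c) ^ 2 / 3`, which is `0`
or `8/3`, while the line carries no ordered boundary edge if it is constant and `2` or `4` of them
otherwise. Each edge of the cube is counted twice as an ordered edge. -/

open Finset Function

lemma sum_trits (g : ℝ → ℝ) : ∑ b ∈ ({-1, 0, 1} : Finset ℝ), g b = g (-1) + g 0 + g 1 := by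
  rw [sum_insert (by norm_num), sum_insert (by norm_num), sum_singleton, add_assoc]

lemma one_le_abs_sub_of_trits {s t : ℝ} (hs : s ∈ ({-1, 0, 1} : Finset ℝ))
    (ht : t ∈ ({-1, 0, 1} : Finset ℝ)) (hst : s ≠ t) : 1 ≤ |s - t| := by
  simp only [mem_insert, mem_singleton] at hs ht
  rcases hs with rfl | rfl | rfl <;> rcases ht with rfl | rfl | rfl <;> revert hst <;> norm_num

lemma exists_eq_update_of_sum_abs_sub_eq_one {ι : Type*} [Fintype ι] [DecidableEq ι]
    {u v : ι → ℝ} (hgap : ∀ i, u i ≠ v i → 1 ≤ |u i - v i|) (hsum : ∑ i, |u i - v i| = 1) :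
    ∃ i, |u i - v i| = 1 ∧ v = update u i (v i) := by
  obtain ⟨i, hi⟩ : ∃ i, u i ≠ v i := by
    by_contra! h
    simp [h] at hsum
  have hrest : ∀ j ≠ i, u j = v j := by
    intro j hji
    by_contra hj
    have hpair : |u j - v j| + |u i - v i| ≤ ∑ k, |u k - v k| := by
      rw [← sum_pair (f := fun k => |u k - v k|) hji]
      exact sum_le_sum_of_subset_of_nonneg (subset_univ _) fun k _ _ => abs_nonneg _
    linarith [hgap i hi, hgap j hj]
  refine ⟨i, le_antisymm ?_ (hgap i hi), ?_⟩
  · exact hsum ▸ single_le_sum (f := fun k => |u k - v k|) (fun k _ => abs_nonneg _) (mem_univ i)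
  · exact (update_eq_iff.2 ⟨rfl, hrest⟩).symm

lemma two_mul_card_image_sym2_mk {α : Type*} [DecidableEq α] {P : Finset (α × α)}
    (hswap : ∀ p ∈ P, p.swap ∈ P) (hdiag : ∀ p ∈ P, p.1 ≠ p.2) :
    2 * #(P.image fun p => s(p.1, p.2)) = #P := by
  rw [card_eq_sum_card_image (fun p => s(p.1, p.2)) P, mul_comm, ← smul_eq_mul, ← sum_const]
  refine sum_congr rfl fun z hz => ?_
  obtain ⟨⟨a, b⟩, hab, rfl⟩ := mem_image.1 hz
  have hfiber : {q ∈ P | s(q.1, q.2) = s(a, b)} = {(a, b), (b, a)} := by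
    ext ⟨c, d⟩
    simp only [mem_filter, mem_insert, mem_singleton, Prod.mk.injEq, Sym2.eq_iff]
    constructor
    · rintro ⟨-, h⟩; exact h
    · rintro (⟨rfl, rfl⟩ | ⟨rfl, rfl⟩)
      · exact ⟨hab, Or.inl ⟨rfl, rfl⟩⟩
      · exact ⟨hswap _ hab, Or.inr ⟨rfl, rfl⟩⟩
  rw [hfiber, card_pair]
  simpa [Prod.ext_iff, eq_comm] using hdiag _ hab

lemma eq_and_eq_of_update_eq_update {ι β : Type*} [DecidableEq ι] {x : ι → β} {i j : ι}
    {b c : β} (hb : b ≠ x i) (h : update x i b = update x j c) : i = j ∧ b = c := by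
  obtain rfl : i = j := by
    by_contra hij
    have := congr_fun h i
    rw [update_self, update_of_ne hij] at this
    exact hb this
  exact ⟨rfl, update_injective x i h⟩

lemma mem_ternary {n : ℕ} {x : Fin n → ℝ} :
    x ∈ ternary n ↔ ∀ i, x i ∈ ({-1, 0, 1} : Finset ℝ) :=
  Fintype.mem_piFinset

lemma update_mem_ternary {n : ℕ} {x : Fin n → ℝ} (hx : x ∈ ternary n) (i : Fin n) {b : ℝ}
    (hb : b ∈ ({-1, 0, 1} : Finset ℝ)) : update x i b ∈ ternary n :=
  mem_ternary.2 fun j => by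
    rw [update_apply]
    split_ifs
    exacts [hb, mem_ternary.1 hx j]

lemma sum_ternary_eq_sum_lines {n : ℕ} (i : Fin n) (g : (Fin n → ℝ) → ℝ) :
    ∑ x ∈ ternary n, g x =
      ∑ r ∈ ternary n with r i = 0, ∑ b ∈ ({-1, 0, 1} : Finset ℝ), g (update r i b) := by
  rw [← sum_product']
  apply sum_nbij' (fun x => (update x i 0, x i)) (fun q => update q.1 i q.2)
  · intro x hx
    simp only [mem_product, mem_filter, update_self, and_true]
    exact ⟨update_mem_ternary hx i (by simp), mem_ternary.1 hx i⟩
  · rintro ⟨r, b⟩ hq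
    simp only [mem_product, mem_filter] at hq
    exact update_mem_ternary hq.1.1 i hq.2
  · intro x _
    simp
  · rintro ⟨r, b⟩ hq
    simp only [mem_product, mem_filter] at hq
    simp [← hq.1.2]
  · intro x _
    simp

section

variable {n : ℕ} (f : (Fin n → ℝ) → ℝ)

noncomputable def orderedBoundary : Finset ((Fin n → ℝ) × (Fin n → ℝ)) :=
  {p ∈ ternary n ×ˢ ternary n | (∑ i, |p.1 i - p.2 i|) = 1 ∧ f p.1 ≠ f p.2}

noncomputable def boundaryDegree (i : Fin n) (x : Fin n → ℝ) : ℝ :=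
  ∑ b ∈ ({-1, 0, 1} : Finset ℝ), if |x i - b| = 1 ∧ f x ≠ f (update x i b) then 1 else 0

noncomputable def fourierTerm (i : Fin n) (x : Fin n → ℝ) : ℝ :=
  f x * (f x - (f (update x i (-1)) + f (update x i 0) + f (update x i 1)) / 3)

lemma card_orderedBoundary :
    (#(orderedBoundary f) : ℝ) = ∑ i, ∑ x ∈ ternary n, boundaryDegree f i x := by
  -- `(x, i, b)` stands for the ordered edge from `x` to `update x i b`
  set Q := {q ∈ ternary n ×ˢ ((univ : Finset (Fin n)) ×ˢ ({-1, 0, 1} : Finset ℝ)) |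
    |q.1 q.2.1 - q.2.2| = 1 ∧ f q.1 ≠ f (update q.1 q.2.1 q.2.2)}
  have hQ : #Q = #(orderedBoundary f) := by
    refine card_bij (fun q _ => (q.1, update q.1 q.2.1 q.2.2)) ?_ ?_ ?_
    · rintro ⟨x, i, b⟩ hq
      simp only [Q, mem_filter, mem_product, mem_univ, true_and] at hq
      obtain ⟨⟨hx, hb⟩, habs, hne⟩ := hq
      refine mem_filter.2 ⟨mem_product.2 ⟨hx, update_mem_ternary hx i hb⟩, ?_, hne⟩
      rw [sum_eq_single i (fun j _ hj => by simp [update_of_ne hj]) (by simp)]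
      simpa using habs
    · rintro ⟨x, i, b⟩ hq ⟨x', i', b'⟩ - h
      simp only [Q, mem_filter] at hq
      obtain ⟨rfl, hupd⟩ := Prod.mk.inj h
      have hb : b ≠ x i := by rintro rfl; simp at hq
      obtain ⟨rfl, rfl⟩ := eq_and_eq_of_update_eq_update hb hupd
      rfl
    · rintro ⟨u, v⟩ hp
      simp only [orderedBoundary, mem_filter, mem_product] at hp
      obtain ⟨⟨hu, hv⟩, hsum, hne⟩ := hp
      have hgap i : u i ≠ v i → 1 ≤ |u i - v i| :=
        one_le_abs_sub_of_trits (mem_ternary.1 hu i) (mem_ternary.1 hv i)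
      obtain ⟨i, habs, hvu⟩ := exists_eq_update_of_sum_abs_sub_eq_one hgap hsum
      refine ⟨(u, i, v i), ?_, by simp [← hvu]⟩
      simp only [Q, mem_filter, mem_product, mem_univ, true_and]
      exact ⟨⟨hu, mem_ternary.1 hv i⟩, habs, hvu ▸ hne⟩
  rw [← hQ, card_filter, Nat.cast_sum, sum_product, sum_comm, sum_product]
  refine sum_congr rfl fun i _ => ?_
  rw [sum_comm]
  push_cast [boundaryDegree]
  rfl

lemma edgeInfluence_eq_sum_boundaryDegree :
    edgeInfluence n f = (∑ i, ∑ x ∈ ternary n, boundaryDegree f i x) / 2 / 3 ^ n := by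
  have hswap : ∀ p ∈ orderedBoundary f, p.swap ∈ orderedBoundary f := by
    rintro ⟨u, v⟩ hp
    simp only [orderedBoundary, mem_filter, mem_product, Prod.swap] at hp ⊢
    obtain ⟨⟨hu, hv⟩, hsum, hne⟩ := hp
    exact ⟨⟨hv, hu⟩, by simpa only [abs_sub_comm] using hsum, hne.symm⟩
  have hdiag : ∀ p ∈ orderedBoundary f, p.1 ≠ p.2 :=
    fun p hp h => (mem_filter.1 hp).2.2 (congrArg f h)
  have hcard := two_mul_card_image_sym2_mk hswap hdiag
  change (#((orderedBoundary f).image fun p => s(p.1, p.2)) : ℝ) / 3 ^ n = _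
  rw [← card_orderedBoundary, ← hcard]
  push_cast
  ring

lemma fourierInfluence_eq_sum_fourierTerm :
    fourierInfluence n f = (∑ i, ∑ x ∈ ternary n, fourierTerm f i x) / 3 ^ n := by
  rw [fourierInfluence, sum_div]
  rfl

lemma line_sum_bounds (i : Fin n) (r : Fin n → ℝ)
    (hf : ∀ b ∈ ({-1, 0, 1} : Finset ℝ), f (update r i b) = 1 ∨ f (update r i b) = -1) :
    3 / 4 * ∑ b ∈ ({-1, 0, 1} : Finset ℝ), fourierTerm f i (update r i b) ≤
        ∑ b ∈ ({-1, 0, 1} : Finset ℝ), boundaryDegree f i (update r i b) ∧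
      ∑ b ∈ ({-1, 0, 1} : Finset ℝ), boundaryDegree f i (update r i b) ≤
        3 / 2 * ∑ b ∈ ({-1, 0, 1} : Finset ℝ), fourierTerm f i (update r i b) := by
  simp only [fourierTerm, boundaryDegree, update_idem, update_self, sum_trits]
  rcases hf (-1) (by simp) with h₁ | h₁ <;> rcases hf 0 (by simp) with h₂ | h₂ <;>
    rcases hf 1 (by simp) with h₃ | h₃ <;> rw [h₁, h₂, h₃] <;> norm_num

lemma direction_sum_bounds (hf : ∀ x ∈ ternary n, f x = 1 ∨ f x = -1) (i : Fin n) :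
    3 / 4 * ∑ x ∈ ternary n, fourierTerm f i x ≤ ∑ x ∈ ternary n, boundaryDegree f i x ∧
      ∑ x ∈ ternary n, boundaryDegree f i x ≤ 3 / 2 * ∑ x ∈ ternary n, fourierTerm f i x := by
  rw [sum_ternary_eq_sum_lines i, sum_ternary_eq_sum_lines i, mul_sum, mul_sum]
  have hline r (hr : r ∈ {r ∈ ternary n | r i = 0}) :=
    line_sum_bounds f i r fun b hb => hf _ (update_mem_ternary (mem_filter.1 hr).1 i hb)
  exact ⟨sum_le_sum fun r hr => (hline r hr).1, sum_le_sum fun r hr => (hline r hr).2⟩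

end

/-- For every `f : {-1,0,1}^n → {±1}`,
`(3/8)·I^Fourier(f) ≤ I(f) ≤ (3/4)·I^Fourier(f)`. -/
theorem stmt_17 (n : ℕ) (f : (Fin n → ℝ) → ℝ)
    (hf : ∀ x ∈ ternary n, f x = 1 ∨ f x = -1) :
    3 / 8 * fourierInfluence n f ≤ edgeInfluence n f ∧
      edgeInfluence n f ≤ 3 / 4 * fourierInfluence n f := by
  have hlower : 3 / 4 * ∑ i, ∑ x ∈ ternary n, fourierTerm f i x ≤
      ∑ i, ∑ x ∈ ternary n, boundaryDegree f i x := by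
    rw [mul_sum]
    exact sum_le_sum fun i _ => (direction_sum_bounds f hf i).1
  have hupper : ∑ i, ∑ x ∈ ternary n, boundaryDegree f i x ≤
      3 / 2 * ∑ i, ∑ x ∈ ternary n, fourierTerm f i x := by
    rw [mul_sum]
    exact sum_le_sum fun i _ => (direction_sum_bounds f hf i).2
  rw [edgeInfluence_eq_sum_boundaryDegree, fourierInfluence_eq_sum_fourierTerm, mul_div_assoc',
    mul_div_assoc']
  constructor <;> apply div_le_div_of_nonneg_right _ (by positivity) <;> linarith
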